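/- Let d be a positive integer, h : ℤ^d → ℝ, x ∈ ℝ^d and r > 0. Define H on B_r(x) by multilinear interpolation: H(y) := ∑_{q ∈ {0,1}^d} ( ∏_{i=1}^d (1 − {y_i} + q_i(2{y_i} − 1)) ) · h(⌊y⌋ + q), where ⌊y⌋ := (⌊y_1⌋, …, ⌊y_d⌋) and {y_i} := y_i − ⌊y_i⌋. Then for all y, y' ∈ B_r(x), |H(y) − H(y')| ≤ √d · ‖Δh‖_{r+√d,∞} · |y − y'|, where ‖Δh‖_{r+√d,∞} := max_{z ∈ ℤ^d ∩ B_{r+√d}(x)} max_{1 ≤ i ≤ d} |h(z + e^{(i)}) − h(z)|. -/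

import Mathlib

open MeasureTheory

/-- The canonical embedding of `ℤ^d` into Euclidean space `ℝ^d`. -/
def latticeEmbed (d : ℕ) (z : Fin d → ℤ) : EuclideanSpace ℝ (Fin d) :=
  WithLp.toLp 2 (fun j => (z j : ℝ))

/-- `‖Δh‖_{ρ,∞}`: the supremum of `|h(z + e⁽ⁱ⁾) − h(z)|` over lattice points `z` in the
closed Euclidean ball of radius `ρ` centred at `x` and over coordinates `i`. -/
noncomputable def deltaNorm (d : ℕ) (h : (Fin d → ℤ) → ℝ)
    (x : EuclideanSpace ℝ (Fin d)) (ρ : ℝ) : ℝ :=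
  sSup {v : ℝ | ∃ (z : Fin d → ℤ) (i : Fin d),
    dist (latticeEmbed d z) x ≤ ρ ∧ v = |h (z + Pi.single i 1) - h z|}

/-!
On a closed unit cell `z + [0,1]^d` the interpolant is the mean of the corner values `h (z + q)`
when the coordinates `qᵢ ∈ {0,1}` are independent Bernoulli(`yᵢ - zᵢ`). It is affine in each
coordinate, with slope a mean of edge differences `h (w + e⁽ⁱ⁾) - h w`, so on the cell it is
`M`-Lipschitz for the ℓ¹ distance, hence `√d M`-Lipschitz for the Euclidean one, `M` bounding the
edge differences at the corners. The cell formulas agree on shared faces, so every point `p` of the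
segment `[y, y']` has a neighbourhood all of whose points share a cell with `p`. The corners of
that cell lie within `√d` of `p ∈ B_r(x)`, and continuous induction along the segment turns the
local bound into the global one.
-/

open Filter Topology Set

def cubeWeight {ι : Type*} [Fintype ι] (f : ι → ℝ) (q : ι → Bool) : ℝ :=
  ∏ i, if q i then f i else 1 - f i

theorem cubeWeight_nonneg {ι : Type*} [Fintype ι] {f : ι → ℝ} (hf : ∀ i, f i ∈ Icc 0 1)
    (q : ι → Bool) : 0 ≤ cubeWeight f q :=
  Finset.prod_nonneg fun i _ => by split <;> linarith [(hf i).1, (hf i).2]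

theorem update_funSplitAt_symm_false {ι : Type*} [DecidableEq ι] (i : ι)
    (q : {j // j ≠ i} → Bool) :
    Function.update ((Equiv.funSplitAt i Bool).symm (false, q)) i true =
      (Equiv.funSplitAt i Bool).symm (true, q) := by
  funext j
  by_cases hj : j = i <;> simp [hj]

section Cube

variable {ι : Type*} [Fintype ι] [DecidableEq ι]

def cubeInterp (f : ι → ℝ) (g : (ι → Bool) → ℝ) : ℝ :=
  ∑ q, cubeWeight f q * g q

theorem sum_cubeWeight (f : ι → ℝ) : ∑ q, cubeWeight f q = 1 :=
  calc ∑ q, cubeWeight f q = ∏ i, ∑ b : Bool, if b then f i else 1 - f i :=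
        (Fintype.prod_sum fun i (b : Bool) => if b then f i else 1 - f i).symm
    _ = 1 := by simp

theorem abs_cubeInterp_le {f : ι → ℝ} {g : (ι → Bool) → ℝ} {M : ℝ}
    (hf : ∀ i, f i ∈ Icc 0 1) (hg : ∀ q, |g q| ≤ M) : |cubeInterp f g| ≤ M :=
  calc |cubeInterp f g| ≤ ∑ q, |cubeWeight f q * g q| := Finset.abs_sum_le_sum_abs _ _
    _ ≤ ∑ q, cubeWeight f q * M := by
        gcongr with q
        rw [abs_mul, abs_of_nonneg (cubeWeight_nonneg hf q)]
        exact mul_le_mul_of_nonneg_left (hg q) (cubeWeight_nonneg hf q)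
    _ = M := by rw [← Finset.sum_mul, sum_cubeWeight, one_mul]

theorem cubeInterp_eq_sum_funSplitAt (f : ι → ℝ) (g : (ι → Bool) → ℝ) (i : ι) :
    cubeInterp f g = ∑ q : {j // j ≠ i} → Bool, cubeWeight (fun j : {j // j ≠ i} => f j) q *
      ((1 - f i) * g ((Equiv.funSplitAt i Bool).symm (false, q)) +
        f i * g ((Equiv.funSplitAt i Bool).symm (true, q))) := by
  rw [cubeInterp, ← (Equiv.funSplitAt i Bool).symm.sum_comp, Fintype.sum_prod_type_right]
  refine Finset.sum_congr rfl fun q _ => ?_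
  have hne : ∀ j : {j // j ≠ i}, (j : ι) ≠ i := fun j => j.2
  simp [cubeWeight, Fintype.prod_eq_mul_prod_subtype_ne _ i, hne]
  ring

theorem abs_cubeInterp_sub_cubeInterp_update_le {f : ι → ℝ}
    {g : (ι → Bool) → ℝ} {M : ℝ} (hf : ∀ i, f i ∈ Icc 0 1)
    (hg : ∀ q i, q i = false → |g (Function.update q i true) - g q| ≤ M) (i : ι) (t : ℝ) :
    |cubeInterp f g - cubeInterp (Function.update f i t) g| ≤ M * |f i - t| := by
  have hrest : (fun j : {j // j ≠ i} => Function.update f i t j) =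
      fun j : {j // j ≠ i} => f j := by
    funext j
    exact Function.update_of_ne j.2 _ _
  rw [cubeInterp_eq_sum_funSplitAt f g i, cubeInterp_eq_sum_funSplitAt _ g i, hrest,
    Function.update_self, ← Finset.sum_sub_distrib]
  calc _ = |cubeInterp (fun j : {j // j ≠ i} => f j) fun q =>
        (f i - t) * (g ((Equiv.funSplitAt i Bool).symm (true, q)) -
          g ((Equiv.funSplitAt i Bool).symm (false, q)))| := by
        rw [cubeInterp]
        exact congrArg _ (Finset.sum_congr rfl fun q _ => by ring)
    _ ≤ M * |f i - t| := by
        refine abs_cubeInterp_le (fun j => hf j) fun q => ?_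
        rw [abs_mul, mul_comm]
        gcongr
        simpa [update_funSplitAt_symm_false] using
          hg ((Equiv.funSplitAt i Bool).symm (false, q)) i (by simp)

theorem abs_cubeInterp_sub_le {f f' : ι → ℝ} {g : (ι → Bool) → ℝ} {M : ℝ}
    (hf : ∀ i, f i ∈ Icc 0 1) (hf' : ∀ i, f' i ∈ Icc 0 1)
    (hg : ∀ q i, q i = false → |g (Function.update q i true) - g q| ≤ M) :
    |cubeInterp f g - cubeInterp f' g| ≤ M * ∑ i, |f i - f' i| := by
  suffices ∀ s : Finset ι,
      |cubeInterp f g - cubeInterp (s.piecewise f' f) g| ≤ M * ∑ i ∈ s, |f i - f' i| by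
    simpa using this Finset.univ
  intro s
  induction s using Finset.induction_on with
  | empty => simp
  | insert i s hi ih =>
    have hmem : ∀ j, s.piecewise f' f j ∈ Icc 0 1 := fun j =>
      s.piecewise_cases f' f (· ∈ Icc 0 1) (hf' j) (hf j)
    have hstep := abs_cubeInterp_sub_cubeInterp_update_le hmem hg i (f' i)
    rw [s.piecewise_eq_of_notMem _ _ hi] at hstep
    rw [Finset.piecewise_insert, Finset.sum_insert hi, mul_add]
    calc _ ≤ |cubeInterp f g - cubeInterp (s.piecewise f' f) g| +
          |cubeInterp (s.piecewise f' f) g -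
            cubeInterp (Function.update (s.piecewise f' f) i (f' i)) g| := abs_sub_le _ _ _
      _ ≤ _ := by linarith

end Cube

section Euclidean

variable {ι : Type*} [Fintype ι]

theorem sum_abs_sub_le_sqrt_card_mul_dist (u v : EuclideanSpace ℝ ι) :
    ∑ j, |u j - v j| ≤ √(Fintype.card ι) * dist u v := by
  rw [EuclideanSpace.dist_eq, ← Real.sqrt_mul (Nat.cast_nonneg _)]
  refine le_trans (le_abs_self _) (Real.abs_le_sqrt ?_)
  simpa [Real.dist_eq] using sq_sum_le_card_mul_sum_sq (s := Finset.univ)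
    (f := fun j => |u j - v j|)

theorem dist_le_sqrt_card_of_forall_abs_sub_le_one {u v : EuclideanSpace ℝ ι}
    (h : ∀ j, |u j - v j| ≤ 1) : dist u v ≤ √(Fintype.card ι) := by
  rw [EuclideanSpace.dist_eq]
  gcongr
  calc ∑ j, dist (u j) (v j) ^ 2 ≤ ∑ _j : ι, (1 : ℝ) :=
        Finset.sum_le_sum fun j _ => pow_le_one₀ dist_nonneg (h j)
    _ = Fintype.card ι := by simp

theorem eventually_floor_le_and_le_floor_add_one (p : EuclideanSpace ℝ ι) :
    ∀ᶠ a in 𝓝 p, ∀ j, (⌊a j⌋ : ℝ) ≤ p j ∧ p j ≤ ⌊a j⌋ + 1 := by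
  refine eventually_all.2 fun j => ?_
  have hmem : Ioo (⌈p j⌉ - 1 : ℝ) (⌊p j⌋ + 1) ∈ 𝓝 (p j) :=
    Ioo_mem_nhds (by linarith [Int.ceil_lt_add_one (p j)]) (Int.lt_floor_add_one _)
  filter_upwards [(PiLp.continuous_apply 2 _ j).continuousAt.preimage_mem_nhds hmem]
    with a ⟨hlo, hhi⟩
  have hfloor : ⌊a j⌋ ≤ ⌊p j⌋ := Int.lt_add_one_iff.1 (Int.floor_lt.2 (by exact_mod_cast hhi))
  have hceil : ⌈p j⌉ - 1 ≤ ⌊a j⌋ := Int.le_floor.2 (by push_cast; exact hlo.le)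
  constructor
  · exact le_trans (by exact_mod_cast hfloor) (Int.floor_le _)
  · exact le_trans (Int.le_ceil _) (by exact_mod_cast (by omega : ⌈p j⌉ ≤ ⌊a j⌋ + 1))

end Euclidean

theorem dist_image_le_of_eventually_dist_le {E : Type*} [PseudoMetricSpace E] {f : ℝ → E}
    {a b C : ℝ} (hab : a ≤ b)
    (hf : ∀ t ∈ Icc a b, ∀ᶠ s in 𝓝[Icc a b] t, dist (f s) (f t) ≤ C * |s - t|) :
    dist (f b) (f a) ≤ C * (b - a) := by
  have hcont : ContinuousOn f (Icc a b) := fun t ht => by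
    refine tendsto_iff_dist_tendsto_zero.2
      (squeeze_zero' (Eventually.of_forall fun _ => dist_nonneg) (hf t ht) ?_)
    have : Tendsto (fun s => C * |s - t|) (𝓝 t) (𝓝 (C * |t - t|)) :=
      (continuous_const.mul (continuous_id.sub continuous_const).abs).tendsto t
    simpa using this.mono_left nhdsWithin_le_nhds
  have hclosed : IsClosed ({t | dist (f t) (f a) ≤ C * (t - a)} ∩ Icc a b) := by
    convert (isClosed_Icc (a := a) (b := b)).isClosed_le
      ((continuous_id.dist (continuous_const (y := f a))).comp_continuousOn hcont)
      ((continuous_const (y := C)).mul (continuous_id.sub (continuous_const (y := a)))).continuousOn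
      using 1
    ext t
    simp [and_comm]
  refine hclosed.Icc_subset_of_forall_mem_nhdsWithin (by simp) (fun t ⟨ht, htIco⟩ => ?_)
    ⟨hab, le_rfl⟩
  have hle : 𝓝[>] t ≤ 𝓝[Icc a b] t := nhdsWithin_le_of_mem <|
    mem_of_superset (Ioo_mem_nhdsGT htIco.2) fun s hs => ⟨htIco.1.trans hs.1.le, hs.2.le⟩
  filter_upwards [hle (hf t (Ico_subset_Icc_self htIco)), self_mem_nhdsWithin] with s hs hts
  calc dist (f s) (f a) ≤ dist (f s) (f t) + dist (f t) (f a) := dist_triangle _ _ _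
    _ ≤ C * |s - t| + C * (t - a) := add_le_add hs ht
    _ = C * (s - a) := by rw [abs_of_pos (sub_pos.2 hts)]; ring

theorem floor_eq_or_of_mem_Icc {z : ℤ} {a : ℝ} (ha : (z : ℝ) ≤ a ∧ a ≤ z + 1) :
    (⌊a⌋ = z ∧ Int.fract a = a - z) ∨ (⌊a⌋ = z + 1 ∧ Int.fract a = 0 ∧ a - z = 1) := by
  rcases ha.2.lt_or_eq with hlt | heq
  · have hfl : ⌊a⌋ = z := Int.floor_eq_iff.2 ⟨ha.1, hlt⟩
    exact Or.inl ⟨hfl, by rw [← Int.self_sub_floor, hfl]⟩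
  · have ha' : a = ((z + 1 : ℤ) : ℝ) := by push_cast; exact heq
    right
    subst ha'
    simp

section Lattice

variable {ι : Type*}

def cellVertex (z : ι → ℤ) (q : ι → Bool) : ι → ℤ :=
  fun i => z i + if q i then 1 else 0

theorem cellVertex_update_true [DecidableEq ι] (z : ι → ℤ) {q : ι → Bool} {i : ι}
    (hq : q i = false) :
    cellVertex z (Function.update q i true) = cellVertex z q + Pi.single i 1 := by
  funext j
  by_cases hj : j = i
  · subst hj; simp [cellVertex, hq]
  · simp [cellVertex, hj]

theorem abs_cellVertex_sub_le_one {z : ι → ℤ} {p : ι → ℝ}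
    (hp : ∀ j, (z j : ℝ) ≤ p j ∧ p j ≤ z j + 1) (q : ι → Bool) (j : ι) :
    |(cellVertex z q j : ℝ) - p j| ≤ 1 := by
  rw [abs_le]
  unfold cellVertex
  split <;> push_cast <;> constructor <;> linarith [hp j]

variable [Fintype ι] [DecidableEq ι]

noncomputable def latticeInterp (h : (ι → ℤ) → ℝ) (y : EuclideanSpace ℝ ι) : ℝ :=
  cubeInterp (fun i => Int.fract (y i)) fun q => h (cellVertex (fun i => ⌊y i⌋) q)

theorem latticeInterp_eq_cubeInterp_of_mem_cell (h : (ι → ℤ) → ℝ) {y : EuclideanSpace ℝ ι}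
    {z : ι → ℤ} (hz : ∀ j, (z j : ℝ) ≤ y j ∧ y j ≤ z j + 1) :
    latticeInterp h y = cubeInterp (fun j => y j - z j) fun q => h (cellVertex z q) := by
  have hcell := fun j => floor_eq_or_of_mem_Icc (hz j)
  -- Where `⌊y j⌋ = z j + 1` (so `y j = z j + 1`), the two labellings of the corners differ by
  -- flipping `q j`; the corners they disagree on carry the weight `1 - (y j - z j) = 0`.
  let flip : (ι → Bool) → ι → Bool := fun q j => if ⌊y j⌋ = z j then q j else !q j
  have hflip : Function.Involutive flip := fun q => by
    funext j
    by_cases hj : ⌊y j⌋ = z j <;> simp [flip, hj]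
  rw [latticeInterp, cubeInterp, ← Equiv.sum_comp hflip.toPerm]
  refine Finset.sum_congr rfl fun q _ => ?_
  have hweight : cubeWeight (fun j => Int.fract (y j)) (flip q) =
      cubeWeight (fun j => y j - z j) q := by
    refine Finset.prod_congr rfl fun j _ => ?_
    rcases hcell j with ⟨hfl, hfr⟩ | ⟨hfl, hfr, hsub⟩ <;> cases hqj : q j <;> simp [flip, *]
  rw [Function.Involutive.coe_toPerm, hweight]
  by_cases hq : ∀ j, ⌊y j⌋ ≠ z j → q j = true
  · congr 2
    funext j
    rcases hcell j with ⟨hfl, -⟩ | ⟨hfl, -⟩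
    · simp [cellVertex, flip, hfl]
    · simp [cellVertex, flip, hfl, hq j (by omega)]
  · obtain ⟨j, hj, hqj⟩ : ∃ j, ⌊y j⌋ ≠ z j ∧ q j = false := by simpa using hq
    have hsub : y j - z j = 1 := by
      rcases hcell j with ⟨hfl, -⟩ | ⟨-, -, hsub⟩
      · exact absurd hfl hj
      · exact hsub
    rw [cubeWeight, Finset.prod_eq_zero (Finset.mem_univ j) (by simp [hqj, hsub]), zero_mul,
      zero_mul]

theorem eventually_dist_latticeInterp_le (h : (ι → ℤ) → ℝ) {p : EuclideanSpace ℝ ι} {M : ℝ}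
    (hM₀ : 0 ≤ M)
    (hM : ∀ w : ι → ℤ, (∀ j, |(w j : ℝ) - p j| ≤ 1) → ∀ i, |h (w + Pi.single i 1) - h w| ≤ M) :
    ∀ᶠ a in 𝓝 p,
      dist (latticeInterp h a) (latticeInterp h p) ≤ √(Fintype.card ι) * M * dist a p := by
  filter_upwards [eventually_floor_le_and_le_floor_add_one p] with a ha
  have hedge : ∀ q i, q i = false →
      |h (cellVertex (fun j => ⌊a j⌋) (Function.update q i true)) -
        h (cellVertex (fun j => ⌊a j⌋) q)| ≤ M := fun q i hq => by
    rw [cellVertex_update_true _ hq]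
    exact hM _ (abs_cellVertex_sub_le_one ha q) i
  have hfract : ∀ j, Int.fract (a j) ∈ Icc 0 1 :=
    fun j => ⟨Int.fract_nonneg _, (Int.fract_lt_one _).le⟩
  have hp : ∀ j, p j - ⌊a j⌋ ∈ Icc 0 1 := fun j => ⟨by linarith [ha j], by linarith [ha j]⟩
  rw [Real.dist_eq, latticeInterp_eq_cubeInterp_of_mem_cell h ha, latticeInterp]
  calc _ ≤ M * ∑ j, |Int.fract (a j) - (p j - ⌊a j⌋)| := abs_cubeInterp_sub_le hfract hp hedge
    _ = M * ∑ j, |a j - p j| := by simp only [Int.fract, sub_sub_sub_cancel_right]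
    _ ≤ M * (√(Fintype.card ι) * dist a p) := by
        gcongr
        exact sum_abs_sub_le_sqrt_card_mul_dist a p
    _ = _ := by ring

end Lattice

theorem finite_setOf_dist_latticeEmbed_le (d : ℕ) (x : EuclideanSpace ℝ (Fin d)) (ρ : ℝ) :
    {z : Fin d → ℤ | dist (latticeEmbed d z) x ≤ ρ}.Finite := by
  refine (Set.Finite.pi' fun j => Set.finite_Icc ⌈x j - ρ⌉ ⌊x j + ρ⌋).subset fun z hz j => ?_
  have hj : |(z j : ℝ) - x j| ≤ ρ := (PiLp.dist_apply_le _ _ j).trans hz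
  rw [abs_le] at hj
  exact ⟨Int.ceil_le.2 (by linarith), Int.le_floor.2 (by linarith)⟩

theorem le_deltaNorm {d : ℕ} (h : (Fin d → ℤ) → ℝ) {x : EuclideanSpace ℝ (Fin d)} {ρ : ℝ}
    {z : Fin d → ℤ} (hz : dist (latticeEmbed d z) x ≤ ρ) (i : Fin d) :
    |h (z + Pi.single i 1) - h z| ≤ deltaNorm d h x ρ := by
  refine le_csSup (((finite_setOf_dist_latticeEmbed_le d x ρ).image2
    (fun z i => |h (z + Pi.single i 1) - h z|) Set.finite_univ).bddAbove.mono ?_) ⟨z, i, hz, rfl⟩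
  rintro _ ⟨z, i, hz, rfl⟩
  exact ⟨z, hz, i, trivial, rfl⟩

theorem deltaNorm_nonneg (d : ℕ) (h : (Fin d → ℤ) → ℝ) (x : EuclideanSpace ℝ (Fin d)) (ρ : ℝ) :
    0 ≤ deltaNorm d h x ρ :=
  Real.sSup_nonneg fun _ ⟨_, _, _, hv⟩ => hv ▸ abs_nonneg _

theorem interpolation_lipschitz_general (d : ℕ) (h : (Fin d → ℤ) → ℝ)
    (x : EuclideanSpace ℝ (Fin d)) (r : ℝ)
    (H : EuclideanSpace ℝ (Fin d) → ℝ)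
    (hH : ∀ y : EuclideanSpace ℝ (Fin d), dist y x ≤ r →
      H y = ∑ q : Fin d → Bool,
        (∏ i : Fin d,
          (1 - Int.fract (y i) + (if q i then (1:ℝ) else 0) * (2 * Int.fract (y i) - 1)))
          * h (fun i => ⌊y i⌋ + (if q i then 1 else 0))) :
    ∀ y y' : EuclideanSpace ℝ (Fin d), dist y x ≤ r → dist y' x ≤ r →
      |H y - H y'| ≤ Real.sqrt d * deltaNorm d h x (r + Real.sqrt d) * dist y y' := by
  intro y y' hy hy'
  set M := deltaNorm d h x (r + √d)
  have hHI : ∀ w, dist w x ≤ r → H w = latticeInterp h w := fun w hw => by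
    rw [hH w hw, latticeInterp, cubeInterp]
    refine Finset.sum_congr rfl fun q _ => congrArg (· * _) (Finset.prod_congr rfl fun i _ => ?_)
    cases q i <;> simp only [Bool.false_eq_true, if_true, if_false] <;> ring
  let γ := AffineMap.lineMap (k := ℝ) y y'
  have hloc : ∀ t ∈ Icc (0 : ℝ) 1, ∀ᶠ s in 𝓝[Icc 0 1] t,
      dist (latticeInterp h (γ s)) (latticeInterp h (γ t)) ≤ √d * M * dist y y' * |s - t| := by
    intro t ht
    have hγt : dist (γ t) x ≤ r := (convex_closedBall x r).lineMap_mem hy hy' ht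
    have hedge : ∀ w : Fin d → ℤ, (∀ j, |(w j : ℝ) - γ t j| ≤ 1) →
        ∀ i, |h (w + Pi.single i 1) - h w| ≤ M := fun w hw => le_deltaNorm h <|
      calc dist (latticeEmbed d w) x ≤ dist (latticeEmbed d w) (γ t) + dist (γ t) x :=
            dist_triangle _ _ _
        _ ≤ √d + r := by
            gcongr
            simpa using dist_le_sqrt_card_of_forall_abs_sub_le_one (u := latticeEmbed d w) hw
        _ = r + √d := add_comm _ _
    filter_upwards [nhdsWithin_le_nhds ((AffineMap.lineMap_continuous.tendsto t).eventually
      (eventually_dist_latticeInterp_le h (deltaNorm_nonneg d h x _) hedge))] with s hs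
    rw [dist_lineMap_lineMap, Real.dist_eq s t, Fintype.card_fin] at hs
    exact hs.trans_eq (by ring)
  have hγ := dist_image_le_of_eventually_dist_le zero_le_one hloc
  rw [hHI y hy, hHI y' hy', ← Real.dist_eq, dist_comm]
  simpa [γ] using hγ

/-- the multilinear interpolation `H` of `h` is Lipschitz on `B_r(x)` with
constant `√d · ‖Δh‖_{r+√d,∞}`. -/
theorem interpolation_lipschitz (d : ℕ) (hd : 0 < d) (h : (Fin d → ℤ) → ℝ)
    (x : EuclideanSpace ℝ (Fin d)) (r : ℝ) (hr : 0 < r)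
    (H : EuclideanSpace ℝ (Fin d) → ℝ)
    (hH : ∀ y : EuclideanSpace ℝ (Fin d), dist y x ≤ r →
      H y = ∑ q : Fin d → Bool,
        (∏ i : Fin d,
          (1 - Int.fract (y i) + (if q i then (1:ℝ) else 0) * (2 * Int.fract (y i) - 1)))
          * h (fun i => ⌊y i⌋ + (if q i then 1 else 0))) :
    ∀ y y' : EuclideanSpace ℝ (Fin d), dist y x ≤ r → dist y' x ≤ r →
      |H y - H y'| ≤ Real.sqrt d * deltaNorm d h x (r + Real.sqrt d) * dist y y' :=
  interpolation_lipschitz_general d h x r H hH
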